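/- arXiv:1109.0366 — 2 statements merged into one kernel-verified Lean document; each statement's English description precedes it below -/
import Mathlib

section
/- A coupling of a half-turn symmetric configuration of odd size: if π is a perfect matching of {1,...,2L} with L odd that is noncrossing and invariant under i ↦ i + L (mod 2L), then π contains exactly one 'diameter' pair of the form (i, i+L). -/
/-!
Since the matching `f` commutes with the half-turn, it descends to an involution of the `L`
antipodal pairs, i.e. of `ZMod L`, whose fixed points are exactly the diameters. An involution
of a set of odd size has a fixed point, so a diameter exists. Two diameters through different
antipodal pairs `{a, a + L}`, `{b, b + L}` with `a < b < L` interleave as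
`a < b < a + L < b + L`, so noncrossingness leaves only one.
-/

/-- Points `1, ..., 2L` on a circle are modeled by `ZMod (2L)`. A matching
(given as a function) is noncrossing if no two of its pairs interleave. -/
def IsNoncrossing {m : ℕ} (f : ZMod m → ZMod m) : Prop :=
  ∀ a c : ZMod m, a.val < c.val → c.val < (f a).val → (f a).val < (f c).val → False

open Function in
theorem Function.Involutive.exists_isFixedPt_of_odd_card {α : Type*} [Fintype α] {f : α → α}
    (hf : Involutive f) (hα : Odd (Fintype.card α)) : ∃ x, IsFixedPt f x := by
  classical
  let g : Function.End α := f
  have hmod := Equiv.Perm.card_fixedPoints_modEq (p := 2) (n := 1) (f := g) (funext hf)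
  by_contra! h
  have : IsEmpty (fixedPoints g) := ⟨fun x => h x x.2⟩
  rw [Fintype.card_eq_zero (α := fixedPoints g), Nat.modEq_zero_iff_dvd,
    ← even_iff_two_dvd] at hmod
  exact Nat.not_even_iff_odd.2 hα hmod

section HalfTurn

variable {L : ℕ}

def halfTurnQuotient (L : ℕ) : ZMod (2 * L) →+* ZMod L :=
  ZMod.castHom (dvd_mul_left L 2) (ZMod L)

@[simp]
lemma halfTurnQuotient_natCast (k : ℕ) : halfTurnQuotient L k = k := map_natCast _ k

lemma val_add_half_of_lt {x : ZMod (2 * L)} (hx : x.val < L) : (x + L).val = x.val + L := by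
  rw [ZMod.val_add_of_lt] <;> rw [ZMod.val_natCast_of_lt (by omega)]
  omega

lemma add_half_add_half (x : ZMod (2 * L)) : x + L + L = x := by
  rw [add_assoc, ← Nat.cast_add, ← two_mul, ZMod.natCast_self, add_zero]

variable [NeZero L]

lemma halfTurnQuotient_eq_zero_iff {z : ZMod (2 * L)} :
    halfTurnQuotient L z = 0 ↔ z = 0 ∨ z = L := by
  constructor
  · intro hz
    rw [halfTurnQuotient, ZMod.castHom_apply, ZMod.cast_eq_val, ZMod.natCast_eq_zero_iff] at hz
    obtain ⟨k, hk⟩ := hz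
    have hk2 : k < 2 := by
      have := z.val_lt
      nlinarith [Nat.pos_of_neZero L]
    rw [← ZMod.natCast_zmod_val z, hk]
    interval_cases k <;> simp
  · rintro (rfl | rfl) <;> simp

lemma halfTurnQuotient_eq_iff {x y : ZMod (2 * L)} :
    halfTurnQuotient L x = halfTurnQuotient L y ↔ y = x ∨ y = x + L := by
  rw [eq_comm, ← sub_eq_zero, ← map_sub, halfTurnQuotient_eq_zero_iff, sub_eq_zero,
    sub_eq_iff_eq_add']

lemma halfTurnQuotient_add_half (x : ZMod (2 * L)) :
    halfTurnQuotient L (x + L) = halfTurnQuotient L x :=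
  (halfTurnQuotient_eq_iff.2 (Or.inr rfl)).symm

def halfTurnLift (y : ZMod L) : ZMod (2 * L) := y.val

lemma halfTurnQuotient_lift (y : ZMod L) : halfTurnQuotient L (halfTurnLift y) = y := by
  rw [halfTurnLift, halfTurnQuotient_natCast, ZMod.natCast_zmod_val]

lemma val_halfTurnLift (y : ZMod L) : (halfTurnLift y : ZMod (2 * L)).val < L := by
  rw [halfTurnLift, ZMod.val_natCast_of_lt] <;> have := y.val_lt <;> omega

end HalfTurn

section HalfTurnSymmetricMatching

variable {L : ℕ} [NeZero L] {f : ZMod (2 * L) → ZMod (2 * L)}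

def halfTurnDescend (f : ZMod (2 * L) → ZMod (2 * L)) (y : ZMod L) : ZMod L :=
  halfTurnQuotient L (f (halfTurnLift y))

lemma halfTurnDescend_halfTurnQuotient (hsym : ∀ x, f (x + L) = f x + L) (x : ZMod (2 * L)) :
    halfTurnDescend f (halfTurnQuotient L x) = halfTurnQuotient L (f x) := by
  rcases halfTurnQuotient_eq_iff.1 (halfTurnQuotient_lift (halfTurnQuotient L x)).symm with h | h
  · rw [halfTurnDescend, h]
  · rw [halfTurnDescend, h, hsym, halfTurnQuotient_add_half]

lemma involutive_halfTurnDescend (hinv : Function.Involutive f)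
    (hsym : ∀ x, f (x + L) = f x + L) : Function.Involutive (halfTurnDescend f) := by
  intro y
  calc halfTurnDescend f (halfTurnDescend f y)
      = halfTurnQuotient L (f (f (halfTurnLift y))) := halfTurnDescend_halfTurnQuotient hsym _
    _ = y := by rw [hinv, halfTurnQuotient_lift]

theorem exists_diameter_of_odd (hL : Odd L) (hinv : Function.Involutive f)
    (hfix : ∀ x, f x ≠ x) (hsym : ∀ x, f (x + L) = f x + L) : ∃ i, f i = i + L := by
  obtain ⟨y, hy⟩ := (involutive_halfTurnDescend hinv hsym).exists_isFixedPt_of_odd_card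
    (by rwa [ZMod.card])
  have : halfTurnQuotient L (halfTurnLift y) = halfTurnQuotient L (f (halfTurnLift y)) := by
    rw [halfTurnQuotient_lift]; exact hy.symm
  rcases halfTurnQuotient_eq_iff.1 this with h | h
  · exact absurd h (hfix _)
  · exact ⟨_, h⟩

lemma eq_of_isNoncrossing_of_val_lt (hnc : IsNoncrossing f) {a b : ZMod (2 * L)}
    (ha : a.val < L) (hb : b.val < L) (hfa : f a = a + L) (hfb : f b = b + L) : a = b := by
  have hfa' : (f a).val = a.val + L := by rw [hfa, val_add_half_of_lt ha]
  have hfb' : (f b).val = b.val + L := by rw [hfb, val_add_half_of_lt hb]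
  rcases lt_trichotomy a.val b.val with h | h | h
  · exact (hnc a b h (by omega) (by omega)).elim
  · exact ZMod.val_injective _ h
  · exact (hnc b a h (by omega) (by omega)).elim

lemma diameter_halfTurnLift (hinv : Function.Involutive f) {i : ZMod (2 * L)}
    (hi : f i = i + L) :
    f (halfTurnLift (halfTurnQuotient L i)) = halfTurnLift (halfTurnQuotient L i) + L := by
  rcases halfTurnQuotient_eq_iff.1 (halfTurnQuotient_lift (halfTurnQuotient L i)).symm with h | h
  · rwa [h]
  · rw [h, ← hi, hinv, hi, add_half_add_half]

lemma halfTurnQuotient_eq_of_diameter (hinv : Function.Involutive f) (hnc : IsNoncrossing f)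
    {i j : ZMod (2 * L)} (hi : f i = i + L) (hj : f j = j + L) :
    halfTurnQuotient L i = halfTurnQuotient L j := by
  have h := eq_of_isNoncrossing_of_val_lt hnc (val_halfTurnLift _) (val_halfTurnLift _)
    (diameter_halfTurnLift hinv hi) (diameter_halfTurnLift hinv hj)
  rw [← halfTurnQuotient_lift (halfTurnQuotient L i), h, halfTurnQuotient_lift]

end HalfTurnSymmetricMatching

/-- If `L` is odd and `π` is a noncrossing perfect matching of `{1, ..., 2L}`
invariant under the half-turn `i ↦ i + L (mod 2L)`, then `π` contains exactly
one diameter pair `(i, i + L)`. -/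
theorem odd_halfturn_unique_diameter (L : ℕ) (hL : Odd L)
    (f : ZMod (2 * L) → ZMod (2 * L))
    (hinv : Function.Involutive f) (hfix : ∀ x, f x ≠ x)
    (hnc : IsNoncrossing f)
    (hsym : ∀ x, f (x + (L : ZMod (2 * L))) = f x + (L : ZMod (2 * L))) :
    ∃ i : ZMod (2 * L), f i = i + (L : ZMod (2 * L)) ∧
      ∀ j : ZMod (2 * L), f j = j + (L : ZMod (2 * L)) →
        j = i ∨ j = i + (L : ZMod (2 * L)) := by
  have : NeZero L := ⟨hL.pos.ne'⟩
  obtain ⟨i, hi⟩ := exists_diameter_of_odd hL hinv hfix hsym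
  exact ⟨i, hi, fun j hj =>
    halfTurnQuotient_eq_iff.1 (halfTurnQuotient_eq_of_diameter hinv hnc hi hj)⟩
end

section
/- If π is a noncrossing perfect matching of {1,...,2L} with L even that is invariant under the shift i ↦ i + L (mod 2L), then π contains no pair of the form (i, i+L). -/
open Finset

theorem Finset.even_card_of_involution {α : Type*} {s : Finset α} {g : α → α}
    (hmaps : ∀ a ∈ s, g a ∈ s) (hinv : ∀ a ∈ s, g (g a) = a) (hfree : ∀ a ∈ s, g a ≠ a) :
    Even #s := by
  have h : ∑ _a ∈ s, (1 : ZMod 2) = 0 :=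
    sum_involution (fun a _ => g a) (fun _ _ => by decide) (fun a ha _ => hfree a ha) hmaps hinv
  rw [sum_const, nsmul_one, ZMod.natCast_eq_zero_iff] at h
  exact even_iff_two_dvd.mpr h

namespace IsNoncrossing

variable {m : ℕ} [NeZero m] {f : ZMod m → ZMod m}

theorem mapsTo_inside (hnc : IsNoncrossing f) (hinv : Function.Involutive f) {x y : ZMod m}
    (hxy : x.val < y.val) (hyx : y.val < (f x).val) :
    x.val < (f y).val ∧ (f y).val < (f x).val := by
  have hne_x : (f y).val ≠ x.val := fun h => by
    rw [← ZMod.val_injective m h, hinv] at hyx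
    exact lt_irrefl _ hyx
  have hne_fx : (f y).val ≠ (f x).val := fun h => by
    rw [hinv.injective (ZMod.val_injective m h)] at hxy
    exact lt_irrefl _ hxy
  constructor
  · by_contra! h
    exact hnc (f y) x (lt_of_le_of_ne h hne_x) (by rwa [hinv]) (by rwa [hinv])
  · by_contra! h
    exact hnc x y hxy hyx (lt_of_le_of_ne h hne_fx.symm)

theorem odd_val_sub (hnc : IsNoncrossing f) (hinv : Function.Involutive f)
    (hfree : ∀ x, f x ≠ x) (x : ZMod m) : Odd (((f x).val : ℤ) - x.val) := by
  wlog hlt : x.val < (f x).val generalizing x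
  · have hgt : (f x).val < x.val :=
      lt_of_le_of_ne (not_lt.mp hlt) fun h => hfree x (ZMod.val_injective m h)
    have := this (f x) (by rwa [hinv])
    rw [hinv] at this
    simpa using this.neg
  -- The arc strictly between `x` and `f x`, read through `ZMod.val`.
  let g : ℕ → ℕ := fun n => (f n).val
  have hval : ∀ n ∈ Ioo x.val (f x).val, ((n : ZMod m)).val = n := fun n hn =>
    ZMod.val_natCast_of_lt ((mem_Ioo.mp hn).2.trans (ZMod.val_lt _))
  have heven : Even #(Ioo x.val (f x).val) := by
    refine even_card_of_involution (g := g) (fun n hn => ?_) (fun n hn => ?_) (fun n hn h => ?_)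
    · have hn' := mem_Ioo.mp hn
      rw [← hval n hn] at hn'
      exact mem_Ioo.mpr (mapsTo_inside hnc hinv hn'.1 hn'.2)
    · simp only [g, ZMod.natCast_zmod_val, hinv _]
      exact hval n hn
    · refine hfree n (ZMod.val_injective m ?_)
      rw [hval n hn]
      exact h
  rw [Nat.card_Ioo] at heven
  obtain ⟨k, hk⟩ := heven
  exact ⟨k, by omega⟩

end IsNoncrossing

theorem even_halfturn_no_diameter_general (L : ℕ) (hL : Even L)
    (f : ZMod (2 * L) → ZMod (2 * L))
    (hinv : Function.Involutive f) (hfix : ∀ x, f x ≠ x)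
    (hnc : IsNoncrossing f) :
    ∀ i : ZMod (2 * L), f i ≠ i + (L : ZMod (2 * L)) := by
  intro i hi
  rcases Nat.eq_zero_or_pos L with rfl | hLpos
  · exact hfix i (by simpa using hi)
  have : NeZero (2 * L) := ⟨by omega⟩
  have hLval : (L : ZMod (2 * L)).val = L := ZMod.val_natCast_of_lt (by omega)
  have hdiff : ((i + (L : ZMod (2 * L))).val : ℤ) - i.val = L ∨
      ((i + (L : ZMod (2 * L))).val : ℤ) - i.val = -L := by
    rcases lt_or_ge (i.val + L) (2 * L) with h | h
    · left
      rw [ZMod.val_add_of_lt (by rwa [hLval]), hLval]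
      push_cast
      ring
    · right
      have := ZMod.val_add_val_of_le (a := i) (b := (L : ZMod (2 * L))) (by rwa [hLval])
      omega
  have hodd := hnc.odd_val_sub hinv hfix i
  have hLeven : Even (L : ℤ) := by exact_mod_cast hL
  rw [hi] at hodd
  rcases hdiff with h | h <;> rw [h] at hodd
  · exact Int.not_even_iff_odd.mpr hodd hLeven
  · exact Int.not_even_iff_odd.mpr hodd hLeven.neg

/-- If `L` is even and `π` is a noncrossing perfect matching of `{1, ..., 2L}`
invariant under the half-turn `i ↦ i + L (mod 2L)`, then `π` contains no
diameter pair `(i, i + L)`. -/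
theorem even_halfturn_no_diameter (L : ℕ) (hL : Even L) (hLpos : 0 < L)
    (f : ZMod (2 * L) → ZMod (2 * L))
    (hinv : Function.Involutive f) (hfix : ∀ x, f x ≠ x)
    (hnc : IsNoncrossing f)
    (hsym : ∀ x, f (x + (L : ZMod (2 * L))) = f x + (L : ZMod (2 * L))) :
    ∀ i : ZMod (2 * L), f i ≠ i + (L : ZMod (2 * L)) :=
  even_halfturn_no_diameter_general L hL f hinv hfix hnc
end
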